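/- arXiv:1105.5190 — 3 statements merged into one kernel-verified Lean document; each statement's English description precedes it below -/
import Mathlib

section
/- Let G be a bridgeless cubic graph containing a spanning subgraph that is a subdivision of a Kotzig graph. Then G has a 6-even-subgraph double cover. -/
/-!
Colour the subdivision `B` by its Kotzig colouring, the two halves of a subdivided edge keeping
its colour. For each colour `γ`, the edges of `B` not coloured `γ` form an even subgraph `H γ`
(a subdivided Hamiltonian circuit), any two of whose non-isolated vertices are joined inside it.
Give every edge `m` of `G` outside `B` a colour missing at some `B`-edge at each of its ends, so
that both ends of `m` lie on `H γ` for that colour `γ`, and let `M γ` be the edges outside `B` so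
coloured. Replacing each edge of `M γ` by a path of `H γ` between its ends and taking symmetric
differences gives `S γ ⊆ H γ` with the same odd-degree vertices as `M γ` (a `T`-join). The six
sets `S γ ∪ M γ` and `(H γ \ S γ) ∪ M γ` are then even, and every edge of `G` lies in exactly two
of them: a `B`-edge of colour `κ` in one of each pair with `γ ≠ κ`, an edge of `M γ` in the pair
for `γ`.
-/

namespace CDC

open SimpleGraph

/-- Number of edges in the edge set `S` incident with `v`. -/
noncomputable def esdeg {V : Type} (S : Set (Sym2 V)) (v : V) : ℕ :=
  {e ∈ S | v ∈ e}.ncard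

/-- Degree of `v` in the graph `G` (as a set cardinality, no instances needed). -/
noncomputable def ndeg {V : Type} (G : SimpleGraph V) (v : V) : ℕ :=
  (G.neighborSet v).ncard

def IsCubic {V : Type} (G : SimpleGraph V) : Prop := ∀ v, ndeg G v = 3

/-- A proper edge coloring: distinct edges sharing a vertex get distinct colors. -/
def ProperEdgeColoring {V : Type} (G : SimpleGraph V) (c : Sym2 V → ZMod 3) : Prop :=
  ∀ e₁ ∈ G.edgeSet, ∀ e₂ ∈ G.edgeSet, e₁ ≠ e₂ → (∃ v, v ∈ e₁ ∧ v ∈ e₂) → c e₁ ≠ c e₂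

/-- The spanning subgraph of `G` formed by the edges whose color lies in `A`. -/
def classGraph {V : Type} (G : SimpleGraph V) (c : Sym2 V → ZMod 3) (A : Set (ZMod 3)) :
    SimpleGraph V :=
  SimpleGraph.fromEdgeSet {e ∈ G.edgeSet | c e ∈ A}

/-- A Hamiltonian circuit (as a spanning subgraph): connected and 2-regular. -/
def IsHamCircuit {V : Type} (G : SimpleGraph V) : Prop :=
  G.Connected ∧ ∀ v, ndeg G v = 2

/-- A Kotzig graph: cubic with a proper 3-edge-coloring where each pair of
color classes forms a Hamiltonian circuit. -/
def IsKotzig {V : Type} (G : SimpleGraph V) (c : Sym2 V → ZMod 3) : Prop :=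
  IsCubic G ∧ ProperEdgeColoring G c ∧
    ∀ α β : ZMod 3, α ≠ β → IsHamCircuit (classGraph G c {α, β})

/-- Swap colors 1 and 2. -/
def swapColor : ZMod 3 → ZMod 3 := fun x => if x = 1 then 2 else if x = 2 then 1 else x

open Classical in
/-- Switch colors 1 and 2 on the edges of `S`. -/
noncomputable def switch {V : Type} (c : Sym2 V → ZMod 3) (S : Set (Sym2 V)) :
    Sym2 V → ZMod 3 :=
  fun e => if e ∈ S then swapColor (c e) else c e

/-- Property (*): proper coloring where colors {0,1} and {0,2} induce Hamiltonian circuits. -/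
def HasStar {V : Type} (G : SimpleGraph V) (c : Sym2 V → ZMod 3) : Prop :=
  ProperEdgeColoring G c ∧ IsHamCircuit (classGraph G c {0, 1}) ∧
    IsHamCircuit (classGraph G c {0, 2})

/-- The edge set of the 2-factor induced by colors 1 and 2. -/
def Fedges {V : Type} (G : SimpleGraph V) (c : Sym2 V → ZMod 3) : Set (Sym2 V) :=
  {e ∈ G.edgeSet | c e = 1 ∨ c e = 2}

/-- An even edge set: every vertex meets an even number of its edges. -/
def IsEvenEdgeSet {V : Type} (S : Set (Sym2 V)) : Prop := ∀ v, Even (esdeg S v)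

/-- A semi-Kotzig graph: cubic, property (*) holds and is preserved by switching
colors 1 and 2 on any even subgraph of the 2-factor induced by colors 1 and 2. -/
def IsSemiKotzig {V : Type} (G : SimpleGraph V) (c : Sym2 V → ZMod 3) : Prop :=
  IsCubic G ∧ HasStar G c ∧
    ∀ S ⊆ Fedges G c, IsEvenEdgeSet S → HasStar G (switch c S)

/-- An even subgraph of `G`, given by its edge set. -/
def IsEvenSubgraphOf {V : Type} (G : SimpleGraph V) (S : Set (Sym2 V)) : Prop :=
  S ⊆ G.edgeSet ∧ IsEvenEdgeSet S

/-- A 6-even-subgraph double cover. -/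
def HasSixDoubleCover {V : Type} (G : SimpleGraph V) : Prop :=
  ∃ D : Fin 6 → Set (Sym2 V), (∀ i, IsEvenSubgraphOf G (D i)) ∧
    ∀ e ∈ G.edgeSet, {i | e ∈ D i}.ncard = 2

def Bridgeless {V : Type} (G : SimpleGraph V) : Prop := ∀ e, ¬ G.IsBridge e

end CDC


namespace CDC
open SimpleGraph

/-- Subdivide the edge `s(u,v)` of `G`, introducing the new vertex `none`. -/
def subdivideEdge {α : Type} (G : SimpleGraph α) (u v : α) : SimpleGraph (Option α) :=
  SimpleGraph.fromEdgeSet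
    ({e | ∃ a b, G.Adj a b ∧ s(a, b) ≠ s(u, v) ∧ e = s(some a, some b)} ∪
      {s(none, some u), s(none, some v)})

/-- `IsSubdivisionOf G K`: `G` is (isomorphic to) a graph obtained from `K`
by repeatedly subdividing edges. -/
inductive IsSubdivisionOf : {α : Type} → SimpleGraph α → {β : Type} → SimpleGraph β → Prop
  | base {α β : Type} (G : SimpleGraph α) (K : SimpleGraph β) (f : G ≃g K) :
      IsSubdivisionOf G K
  | step {α β : Type} (G : SimpleGraph α) (K : SimpleGraph β) (u v : α) (h : G.Adj u v)
      (hGK : IsSubdivisionOf G K) : IsSubdivisionOf (subdivideEdge G u v) K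
  | iso {α α' β : Type} (G : SimpleGraph α) (G' : SimpleGraph α') (K : SimpleGraph β)
      (f : G ≃g G') (hGK : IsSubdivisionOf G K) : IsSubdivisionOf G' K

/-- Extend an edge labelling of `G` to the graph obtained by subdividing the edge
`s(u,v)`: old edges keep their labels, both new half-edges inherit the label of `s(u,v)`. -/
def extendLabel {α L : Type} (ℓ : Sym2 α → L) (u v : α) : Sym2 (Option α) → L :=
  Sym2.lift ⟨fun x y =>
    match x, y with
    | some a, some b => ℓ s(a, b)
    | _, _ => ℓ s(u, v),
    by rintro (a | a) (b | b) <;> simp only [] ; rw [Sym2.eq_swap]⟩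

/-- Labelled subdivision: `G` with edge labelling `ℓG` is obtained from `K` with edge
labelling `ℓK` by repeatedly subdividing edges, subdivided edges inheriting labels. -/
inductive IsLabeledSubdivisionOf {L : Type} :
    {α : Type} → SimpleGraph α → (Sym2 α → L) → {β : Type} → SimpleGraph β → (Sym2 β → L) → Prop
  | base {α β : Type} (G : SimpleGraph α) (ℓG : Sym2 α → L) (K : SimpleGraph β)
      (ℓK : Sym2 β → L) (f : G ≃g K) (hf : ∀ a b, G.Adj a b → ℓG s(a, b) = ℓK s(f a, f b)) :
      IsLabeledSubdivisionOf G ℓG K ℓK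
  | step {α β : Type} (G : SimpleGraph α) (ℓG : Sym2 α → L) (K : SimpleGraph β)
      (ℓK : Sym2 β → L) (u v : α) (h : G.Adj u v) (hGK : IsLabeledSubdivisionOf G ℓG K ℓK) :
      IsLabeledSubdivisionOf (subdivideEdge G u v) (extendLabel ℓG u v) K ℓK
  | iso {α α' β : Type} (G : SimpleGraph α) (G' : SimpleGraph α') (ℓG : Sym2 α → L)
      (ℓG' : Sym2 α' → L) (K : SimpleGraph β) (ℓK : Sym2 β → L) (f : G ≃g G')
      (hf : ∀ a b, G.Adj a b → ℓG s(a, b) = ℓG' s(f a, f b))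
      (hGK : IsLabeledSubdivisionOf G ℓG K ℓK) : IsLabeledSubdivisionOf G' ℓG' K ℓK

end CDC

namespace CDC

open SimpleGraph Set

section Parity

variable {V : Type}

lemma ncard_symmDiff_add_two_mul_ncard_inter {s t : Set V} (hs : s.Finite) (ht : t.Finite) :
    (symmDiff s t).ncard + 2 * (s ∩ t).ncard = s.ncard + t.ncard := by
  have hst := ncard_inter_add_ncard_sdiff_eq_ncard s t hs
  have hts := ncard_inter_add_ncard_sdiff_eq_ncard t s ht
  rw [inter_comm] at hts
  rw [symmDiff_def, show s \ t ⊔ t \ s = s \ t ∪ t \ s from rfl,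
    ncard_union_eq disjoint_sdiff_sdiff hs.sdiff ht.sdiff]
  omega

lemma esdeg_edgeSet (G : SimpleGraph V) (v : V) : esdeg G.edgeSet v = ndeg G v := by
  have : {e ∈ G.edgeSet | v ∈ e} = (fun w => s(v, w)) '' G.neighborSet v := by
    ext e
    induction e with
    | h x y =>
      simp only [mem_ofPred_eq, mem_edgeSet, mem_image, mem_neighborSet, Sym2.mem_iff]
      constructor
      · rintro ⟨hxy, rfl | rfl⟩
        exacts [⟨y, hxy, rfl⟩, ⟨x, hxy.symm, Sym2.eq_swap⟩]
      · rintro ⟨w, hw, hvw⟩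
        rcases Sym2.eq_iff.mp hvw with ⟨rfl, rfl⟩ | ⟨rfl, rfl⟩
        exacts [⟨hw, Or.inl rfl⟩, ⟨hw.symm, Or.inr rfl⟩]
  rw [esdeg, this, ndeg, ncard_image_of_injective _ fun _ _ => Sym2.congr_right.mp]

def oddVertices (S : Set (Sym2 V)) : Set V := {v | Odd (esdeg S v)}

lemma isEvenEdgeSet_iff_oddVertices_eq_empty (S : Set (Sym2 V)) :
    IsEvenEdgeSet S ↔ oddVertices S = ∅ := by
  simp [IsEvenEdgeSet, oddVertices, eq_empty_iff_forall_notMem]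

lemma oddVertices_singleton (a b : V) : oddVertices {s(a, b)} = {a, b} := by
  ext v
  by_cases hv : v ∈ s(a, b)
  · have : {e ∈ ({s(a, b)} : Set (Sym2 V)) | v ∈ e} = {s(a, b)} := by
      ext e
      simp only [mem_ofPred_eq, mem_singleton_iff, and_iff_left_iff_imp]
      rintro rfl
      exact hv
    rw [oddVertices, mem_ofPred_eq, esdeg, this, ncard_singleton]
    simpa using Sym2.mem_iff.mp hv
  · have : {e ∈ ({s(a, b)} : Set (Sym2 V)) | v ∈ e} = ∅ := by
      ext e
      simp only [mem_ofPred_eq, mem_singleton_iff, mem_empty_iff_false, iff_false, not_and]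
      rintro rfl
      exact hv
    rw [oddVertices, mem_ofPred_eq, esdeg, this, ncard_empty]
    simpa [Sym2.mem_iff] using hv

lemma oddVertices_edges_of_isTrail {G : SimpleGraph V} {a b : V} {p : G.Walk a b}
    (hp : p.IsTrail) (hab : a ≠ b) : oddVertices {e | e ∈ p.edges} = {a, b} := by
  classical
  ext v
  have hdeg : esdeg {e | e ∈ p.edges} v = p.edges.countP (fun e => v ∈ e) := by
    have : {e ∈ {e | e ∈ p.edges} | v ∈ e} =
        ((p.edges.filter (fun e => v ∈ e)).toFinset : Set (Sym2 V)) := by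
      ext e
      simp
    rw [esdeg, this, ncard_coe_finset, List.toFinset_card_of_nodup (hp.edges_nodup.filter _),
      List.countP_eq_length_filter]
  rw [oddVertices, mem_ofPred_eq, hdeg, ← Nat.not_even_iff_odd, hp.even_countP_edges_iff]
  simp [hab, or_iff_not_and_not]

variable [Finite V]

lemma esdeg_symmDiff_add_two_mul_esdeg_inter (A B : Set (Sym2 V)) (v : V) :
    esdeg (symmDiff A B) v + 2 * esdeg (A ∩ B) v = esdeg A v + esdeg B v := by
  have hsymm : {e ∈ symmDiff A B | v ∈ e} = symmDiff {e ∈ A | v ∈ e} {e ∈ B | v ∈ e} := by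
    ext e; simp only [mem_symmDiff, mem_ofPred_eq]; tauto
  have hinter : {e ∈ A ∩ B | v ∈ e} = {e ∈ A | v ∈ e} ∩ {e ∈ B | v ∈ e} := by
    ext e; simp only [mem_inter_iff, mem_ofPred_eq]; tauto
  rw [esdeg, esdeg, esdeg, esdeg, hsymm, hinter]
  exact ncard_symmDiff_add_two_mul_ncard_inter (toFinite _) (toFinite _)

lemma oddVertices_symmDiff (A B : Set (Sym2 V)) :
    oddVertices (symmDiff A B) = symmDiff (oddVertices A) (oddVertices B) := by
  ext v
  have key := esdeg_symmDiff_add_two_mul_esdeg_inter A B v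
  simp only [oddVertices, mem_symmDiff, mem_ofPred_eq, Nat.odd_iff]
  omega

lemma oddVertices_sdiff {H S : Set (Sym2 V)} (hH : IsEvenEdgeSet H) (hSH : S ⊆ H) :
    oddVertices (H \ S) = oddVertices S := by
  rw [← symmDiff_of_le hSH, oddVertices_symmDiff,
    (isEvenEdgeSet_iff_oddVertices_eq_empty H).mp hH]
  exact symmDiff_bot _

lemma isEvenEdgeSet_union {A B : Set (Sym2 V)} (hAB : Disjoint A B)
    (hodd : oddVertices A = oddVertices B) : IsEvenEdgeSet (A ∪ B) := by
  rw [isEvenEdgeSet_iff_oddVertices_eq_empty, ← show symmDiff A B = A ∪ B from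
    hAB.symmDiff_eq_sup, oddVertices_symmDiff, hodd]
  exact symmDiff_self _

theorem exists_subset_edgeSet_oddVertices_eq (H : SimpleGraph V) (M : Set (Sym2 V))
    (hM : ∀ m ∈ M, ¬ m.IsDiag) (hreach : ∀ a b, s(a, b) ∈ M → H.Reachable a b) :
    ∃ S ⊆ H.edgeSet, oddVertices S = oddVertices M := by
  induction M, toFinite M using Set.Finite.induction_on with
  | empty => exact ⟨∅, empty_subset _, rfl⟩
  | @insert m M hmM _ ih =>
    obtain ⟨S, hSH, hS⟩ := ih (fun m' hm' => hM m' (mem_insert_of_mem m hm'))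
      (fun a b h => hreach a b (mem_insert_of_mem _ h))
    induction m with
    | h a b =>
      obtain ⟨p, hp⟩ := (hreach a b (mem_insert _ _)).exists_isPath
      have hab : a ≠ b := fun h => hM _ (mem_insert _ _) (Sym2.mk_isDiag_iff.mpr h)
      refine ⟨symmDiff S {e | e ∈ p.edges}, ?_, ?_⟩
      · exact symmDiff_le_sup.trans (union_subset hSH fun e he => p.edges_subset_edgeSet he)
      · rw [oddVertices_symmDiff, hS, oddVertices_edges_of_isTrail hp.isTrail hab,
          ← oddVertices_singleton, ← oddVertices_symmDiff, insert_eq, union_comm]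
        exact congrArg oddVertices (disjoint_singleton_right.mpr hmM).symmDiff_eq_sup

end Parity

section SubdividedKotzig

variable {α α' : Type}

lemma classGraph_adj (H : SimpleGraph α) (c : Sym2 α → ZMod 3) (A : Set (ZMod 3)) (x y : α) :
    (classGraph H c A).Adj x y ↔ H.Adj x y ∧ c s(x, y) ∈ A := by
  simp only [classGraph, fromEdgeSet_adj, mem_ofPred_eq, mem_edgeSet]
  exact ⟨fun h => h.1, fun h => ⟨h, h.1.ne⟩⟩

lemma classGraph_edgeSet (H : SimpleGraph α) (c : Sym2 α → ZMod 3) (A : Set (ZMod 3)) :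
    (classGraph H c A).edgeSet = {e ∈ H.edgeSet | c e ∈ A} := by
  rw [classGraph, edgeSet_fromEdgeSet, sdiff_eq_left, Set.disjoint_left]
  exact fun e he => H.not_isDiag_of_mem_edgeSet he.1

lemma neighborSet_classGraph (H : SimpleGraph α) (c : Sym2 α → ZMod 3) (A : Set (ZMod 3))
    (v : α) : (classGraph H c A).neighborSet v = {w ∈ H.neighborSet v | c s(v, w) ∈ A} :=
  ext fun w => classGraph_adj H c A v w

def SupportPreconnected (H : SimpleGraph α) : Prop :=
  ∀ u ∈ H.support, ∀ w ∈ H.support, H.Reachable u w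

lemma SupportPreconnected.of_iso {H : SimpleGraph α} {H' : SimpleGraph α'} (f : H ≃g H')
    (h : SupportPreconnected H) : SupportPreconnected H' := by
  intro u hu w hw
  have hsupp : ∀ x ∈ H'.support, f.symm x ∈ H.support := fun x ⟨y, hxy⟩ =>
    ⟨f.symm y, f.symm.map_adj_iff.mpr hxy⟩
  simpa using (h _ (hsupp u hu) _ (hsupp w hw)).map f.toHom

/-- What the colouring of a subdivision of a Kotzig graph inherits from the Kotzig colouring: the
complement of each colour class is a subdivided Hamiltonian circuit. -/
structure IsSubdividedKotzig (H : SimpleGraph α) (c : Sym2 α → ZMod 3) : Prop where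
  ndeg_eq_two_or_three : ∀ v, ndeg H v = 2 ∨ ndeg H v = 3
  color_eq_of_ndeg_eq_two : ∀ v, ndeg H v = 2 →
    ∀ w ∈ H.neighborSet v, ∀ w' ∈ H.neighborSet v, c s(v, w) = c s(v, w')
  injOn_color_of_ndeg_eq_three : ∀ v, ndeg H v = 3 → (H.neighborSet v).InjOn (fun w => c s(v, w))
  supportPreconnected : ∀ γ, SupportPreconnected (classGraph H c {γ}ᶜ)

lemma compl_singleton_eq_pair (γ : ZMod 3) : ({γ}ᶜ : Set (ZMod 3)) = {γ + 1, γ + 2} := by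
  ext x
  simp only [mem_compl_iff, mem_singleton_iff, mem_insert_iff]
  revert x γ
  decide

lemma IsKotzig.isSubdividedKotzig {K : SimpleGraph α} {c : Sym2 α → ZMod 3} (hK : IsKotzig K c) :
    IsSubdividedKotzig K c where
  ndeg_eq_two_or_three v := Or.inr (hK.1 v)
  color_eq_of_ndeg_eq_two v h := absurd (hK.1 v) (by omega)
  injOn_color_of_ndeg_eq_three v _ w hw w' hw' hc := by
    by_contra hne
    exact hK.2.1 _ hw _ hw' (fun h => hne (Sym2.congr_right.mp h)) ⟨v, by simp, by simp⟩ hc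
  supportPreconnected γ u _ w _ := by
    rw [compl_singleton_eq_pair]
    exact (hK.2.2 _ _ (by simp; decide)).1.preconnected u w

end SubdividedKotzig

section Transport

variable {α α' : Type}

lemma neighborSet_apply_iso {H : SimpleGraph α} {H' : SimpleGraph α'} (f : H ≃g H') (a : α) :
    H'.neighborSet (f a) = f '' H.neighborSet a := by
  ext w
  obtain ⟨x, rfl⟩ := f.surjective w
  simp [f.injective.eq_iff, f.map_adj_iff]

lemma ndeg_apply_iso {H : SimpleGraph α} {H' : SimpleGraph α'} (f : H ≃g H') (a : α) :
    ndeg H' (f a) = ndeg H a := by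
  rw [ndeg, ndeg, neighborSet_apply_iso, ncard_image_of_injective _ f.injective]

def classGraphIso {H : SimpleGraph α} {H' : SimpleGraph α'} (f : H ≃g H') (c : Sym2 α → ZMod 3)
    (A : Set (ZMod 3)) : classGraph H c A ≃g classGraph H' (c ∘ Sym2.map f.symm) A where
  toEquiv := f.toEquiv
  map_rel_iff' {x y} := by
    simp [classGraph_adj, f.map_adj_iff]

lemma IsSubdividedKotzig.of_iso {H : SimpleGraph α} {H' : SimpleGraph α'} {c : Sym2 α → ZMod 3}
    (h : IsSubdividedKotzig H c) (f : H ≃g H') : IsSubdividedKotzig H' (c ∘ Sym2.map f.symm) := by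
  have hcolor (a b : α) : (c ∘ Sym2.map f.symm) s(f a, f b) = c s(a, b) := by simp
  refine ⟨fun v => ?_, fun v hv => ?_, fun v hv => ?_, fun γ => ?_⟩
  · obtain ⟨a, rfl⟩ := f.surjective v
    rw [ndeg_apply_iso]
    exact h.ndeg_eq_two_or_three a
  · obtain ⟨a, rfl⟩ := f.surjective v
    rw [ndeg_apply_iso] at hv
    rw [neighborSet_apply_iso]
    rintro _ ⟨w, hw, rfl⟩ _ ⟨w', hw', rfl⟩
    rw [hcolor, hcolor]
    exact h.color_eq_of_ndeg_eq_two a hv w hw w' hw'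
  · obtain ⟨a, rfl⟩ := f.surjective v
    rw [ndeg_apply_iso] at hv
    rw [neighborSet_apply_iso]
    rintro _ ⟨w, hw, rfl⟩ _ ⟨w', hw', rfl⟩ hww'
    simp only [hcolor] at hww'
    rw [h.injOn_color_of_ndeg_eq_three a hv hw hw' hww']
  · exact (h.supportPreconnected γ).of_iso (classGraphIso f c {γ}ᶜ)

end Transport

section Subdivision

variable {α : Type} {H : SimpleGraph α} {u v : α}

lemma subdivideEdge_adj_some_some (a b : α) :
    (subdivideEdge H u v).Adj (some a) (some b) ↔ H.Adj a b ∧ s(a, b) ≠ s(u, v) := by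
  simp only [subdivideEdge, fromEdgeSet_adj, mem_union, mem_ofPred_eq, mem_insert_iff,
    mem_singleton_iff, ne_eq, Option.some.injEq]
  constructor
  · rintro ⟨⟨a', b', hab, hne, he⟩ | he | he, -⟩
    · rcases Sym2.eq_iff.mp he with ⟨h1, h2⟩ | ⟨h1, h2⟩ <;> cases h1 <;> cases h2
      · exact ⟨hab, hne⟩
      · exact ⟨hab.symm, by rwa [Sym2.eq_swap]⟩
    all_goals simp at he
  · rintro ⟨hab, hne⟩
    exact ⟨Or.inl ⟨a, b, hab, hne, rfl⟩, hab.ne⟩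

lemma subdivideEdge_adj_none_some (huv : u ≠ v) (w : α) :
    (subdivideEdge H u v).Adj none (some w) ↔ w = u ∨ w = v := by
  simp only [subdivideEdge, fromEdgeSet_adj, mem_union, mem_ofPred_eq, mem_insert_iff,
    mem_singleton_iff, ne_eq, reduceCtorEq, not_false_eq_true, and_true]
  constructor
  · rintro (⟨a', b', -, -, he⟩ | he | he) <;> simp_all
  · rintro (rfl | rfl) <;> simp

open Classical in
noncomputable def subdivisionNeighbor (u v a w : α) : Option α :=
  if s(a, w) = s(u, v) then none else some w

lemma subdivisionNeighbor_injective (u v a : α) :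
    Function.Injective (subdivisionNeighbor u v a) := by
  intro w w' h
  unfold subdivisionNeighbor at h
  split_ifs at h with hw hw'
  · exact Sym2.congr_right.mp (hw.trans hw'.symm)
  · exact Option.some_injective _ h

lemma extendLabel_none {L : Type} (ℓ : Sym2 α → L) (x : Option α) :
    extendLabel ℓ u v s(none, x) = ℓ s(u, v) := by
  cases x <;> rfl

lemma extendLabel_subdivisionNeighbor (c : Sym2 α → ZMod 3) (a w : α) :
    extendLabel c u v s(some a, subdivisionNeighbor u v a w) = c s(a, w) := by
  unfold subdivisionNeighbor
  split_ifs with h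
  · rw [Sym2.eq_swap, extendLabel_none, h]
  · rfl

lemma neighborSet_subdivideEdge_none (huv : u ≠ v) :
    (subdivideEdge H u v).neighborSet none = {some u, some v} := by
  ext (_ | w)
  · simp
  · simp [subdivideEdge_adj_none_some huv]

lemma neighborSet_subdivideEdge_some (huv : H.Adj u v) (a : α) :
    (subdivideEdge H u v).neighborSet (some a) = subdivisionNeighbor u v a '' H.neighborSet a := by
  ext (_ | b)
  · simp only [mem_neighborSet, mem_image, subdivisionNeighbor]
    rw [adj_comm, subdivideEdge_adj_none_some huv.ne]
    constructor
    · rintro (rfl | rfl)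
      exacts [⟨v, huv, by simp⟩, ⟨u, huv.symm, by simp [Sym2.eq_swap]⟩]
    · rintro ⟨w, -, hw⟩
      split_ifs at hw with h
      rcases Sym2.eq_iff.mp h with ⟨rfl, -⟩ | ⟨rfl, -⟩ <;> simp
  · simp only [mem_neighborSet, mem_image, subdivisionNeighbor, subdivideEdge_adj_some_some]
    constructor
    · rintro ⟨hab, hne⟩
      exact ⟨b, hab, by simp [hne]⟩
    · rintro ⟨w, hw, h⟩
      split_ifs at h with hne
      cases h
      exact ⟨hw, hne⟩

lemma ndeg_subdivideEdge_some (huv : H.Adj u v) (a : α) :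
    ndeg (subdivideEdge H u v) (some a) = ndeg H a := by
  rw [ndeg, ndeg, neighborSet_subdivideEdge_some huv,
    ncard_image_of_injective _ (subdivisionNeighbor_injective u v a)]

lemma ndeg_subdivideEdge_none (huv : H.Adj u v) : ndeg (subdivideEdge H u v) none = 2 := by
  rw [ndeg, neighborSet_subdivideEdge_none huv.ne, ncard_pair (by simpa using huv.ne)]

variable {c : Sym2 α → ZMod 3} {A : Set (ZMod 3)}

lemma neighborSet_classGraph_subdivideEdge_some (huv : H.Adj u v) (a : α) :
    (classGraph (subdivideEdge H u v) (extendLabel c u v) A).neighborSet (some a) =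
      subdivisionNeighbor u v a '' (classGraph H c A).neighborSet a := by
  ext x
  simp only [neighborSet_classGraph, neighborSet_subdivideEdge_some huv, mem_ofPred_eq,
    mem_image]
  constructor
  · rintro ⟨⟨w, hw, rfl⟩, hc⟩
    exact ⟨w, ⟨hw, by rwa [extendLabel_subdivisionNeighbor] at hc⟩, rfl⟩
  · rintro ⟨w, ⟨hw, hc⟩, rfl⟩
    exact ⟨⟨w, hw, rfl⟩, by rwa [extendLabel_subdivisionNeighbor]⟩

lemma reachable_classGraph_subdivideEdge_some (huv : H.Adj u v) {a b : α}
    (hab : (classGraph H c A).Reachable a b) :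
    (classGraph (subdivideEdge H u v) (extendLabel c u v) A).Reachable (some a) (some b) := by
  have hadj {a w : α} (h : (classGraph H c A).Adj a w) :
      (classGraph (subdivideEdge H u v) (extendLabel c u v) A).Adj (some a)
        (subdivisionNeighbor u v a w) := by
    rw [← mem_neighborSet, neighborSet_classGraph_subdivideEdge_some huv]
    exact mem_image_of_mem _ h
  obtain ⟨p⟩ := hab
  induction p with
  | nil => rfl
  | @cons a w _ h _ ih =>
    refine Reachable.trans ?_ ih
    by_cases he : s(a, w) = s(u, v)
    · have h1 := hadj h
      have h2 := hadj h.symm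
      simp only [subdivisionNeighbor, he, Sym2.eq_swap (a := w), if_true] at h1 h2
      exact h1.reachable.trans h2.reachable.symm
    · have h1 := hadj h
      simp only [subdivisionNeighbor, if_neg he] at h1
      exact h1.reachable

lemma exists_reachable_of_mem_support_classGraph_subdivideEdge (huv : H.Adj u v) {x : Option α}
    (hx : x ∈ (classGraph (subdivideEdge H u v) (extendLabel c u v) A).support) :
    ∃ a ∈ (classGraph H c A).support,
      (classGraph (subdivideEdge H u v) (extendLabel c u v) A).Reachable x (some a) := by
  obtain ⟨y, hy⟩ := (mem_support _).mp hx
  cases x with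
  | none =>
    rw [← mem_neighborSet, neighborSet_classGraph, neighborSet_subdivideEdge_none huv.ne,
      mem_ofPred_eq, extendLabel_none] at hy
    refine ⟨u, ⟨v, (classGraph_adj H c A u v).mpr ⟨huv, hy.2⟩⟩, Adj.reachable ?_⟩
    rw [← mem_neighborSet, neighborSet_classGraph, neighborSet_subdivideEdge_none huv.ne]
    exact ⟨by simp, by rw [extendLabel_none]; exact hy.2⟩
  | some a =>
    rw [← mem_neighborSet, neighborSet_classGraph_subdivideEdge_some huv] at hy
    obtain ⟨w, hw, -⟩ := hy
    exact ⟨a, ⟨w, hw⟩, Reachable.refl _⟩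

lemma SupportPreconnected.classGraph_subdivideEdge (huv : H.Adj u v)
    (h : SupportPreconnected (classGraph H c A)) :
    SupportPreconnected (classGraph (subdivideEdge H u v) (extendLabel c u v) A) := by
  intro x hx y hy
  obtain ⟨a, ha, hxa⟩ := exists_reachable_of_mem_support_classGraph_subdivideEdge huv hx
  obtain ⟨b, hb, hyb⟩ := exists_reachable_of_mem_support_classGraph_subdivideEdge huv hy
  exact hxa.trans ((reachable_classGraph_subdivideEdge_some huv (h a ha b hb)).trans hyb.symm)

lemma IsSubdividedKotzig.subdivideEdge (h : IsSubdividedKotzig H c) (huv : H.Adj u v) :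
    IsSubdividedKotzig (subdivideEdge H u v) (extendLabel c u v) := by
  refine ⟨?_, ?_, ?_, fun γ => (h.supportPreconnected γ).classGraph_subdivideEdge huv⟩
  · rintro (_ | a)
    · exact Or.inl (ndeg_subdivideEdge_none huv)
    · rw [ndeg_subdivideEdge_some huv]
      exact h.ndeg_eq_two_or_three a
  · rintro (_ | a) hdeg
    · intro w _ w' _
      rw [extendLabel_none, extendLabel_none]
    · rw [ndeg_subdivideEdge_some huv] at hdeg
      rw [neighborSet_subdivideEdge_some huv]
      rintro _ ⟨x, hx, rfl⟩ _ ⟨x', hx', rfl⟩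
      rw [extendLabel_subdivisionNeighbor, extendLabel_subdivisionNeighbor]
      exact h.color_eq_of_ndeg_eq_two a hdeg x hx x' hx'
  · rintro (_ | a) hdeg
    · rw [ndeg_subdivideEdge_none huv] at hdeg
      omega
    · rw [ndeg_subdivideEdge_some huv] at hdeg
      rw [neighborSet_subdivideEdge_some huv]
      rintro _ ⟨x, hx, rfl⟩ _ ⟨x', hx', rfl⟩ hxx'
      simp only [extendLabel_subdivisionNeighbor] at hxx'
      rw [h.injOn_color_of_ndeg_eq_three a hdeg hx hx' hxx']

end Subdivision

lemma IsSubdivisionOf.exists_isSubdividedKotzig {β γ : Type} {B : SimpleGraph β}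
    {K : SimpleGraph γ} (h : IsSubdivisionOf B K) {cK : Sym2 γ → ZMod 3}
    (hK : IsSubdividedKotzig K cK) : ∃ c, IsSubdividedKotzig B c := by
  induction h with
  | base B K f => exact ⟨_, hK.of_iso f.symm⟩
  | step B K u v huv _ ih =>
    obtain ⟨c, hc⟩ := ih hK
    exact ⟨_, hc.subdivideEdge huv⟩
  | iso B B' K f _ ih =>
    obtain ⟨c, hc⟩ := ih hK
    exact ⟨_, hc.of_iso f⟩

section DoubleCover

variable {V : Type}

lemma ncard_sep_ne_of_injOn {β : Type} [Finite β] {s : Set V} {f : V → β} (hf : s.InjOn f)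
    (hs : s.ncard = Nat.card β) (b : β) : {x ∈ s | f x ≠ b}.ncard = Nat.card β - 1 := by
  have himage : f '' s = univ :=
    eq_of_subset_of_ncard_le (subset_univ _) (by rw [ncard_univ, hf.ncard_image, hs])
  have himage_sep : f '' {x ∈ s | f x ≠ b} = univ \ {b} := by
    ext y
    constructor
    · rintro ⟨x, ⟨-, hx⟩, rfl⟩
      exact ⟨mem_univ _, hx⟩
    · rintro ⟨hy, hyb⟩
      obtain ⟨x, hx, rfl⟩ := himage ▸ hy
      exact ⟨x, ⟨hx, hyb⟩, rfl⟩
  rw [← (hf.mono (sep_subset _ _)).ncard_image, himage_sep,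
    ncard_sdiff_singleton_of_mem (mem_univ b), ncard_univ]

variable {B : SimpleGraph V} {c : Sym2 V → ZMod 3}

lemma IsSubdividedKotzig.isEvenEdgeSet_classGraph_compl (h : IsSubdividedKotzig B c)
    (γ : ZMod 3) : IsEvenEdgeSet (classGraph B c {γ}ᶜ).edgeSet := by
  intro v
  rw [esdeg_edgeSet, ndeg, neighborSet_classGraph]
  simp only [mem_compl_iff, mem_singleton_iff]
  rcases h.ndeg_eq_two_or_three v with h2 | h3
  · by_cases hγ : ∃ w ∈ B.neighborSet v, c s(v, w) ≠ γ
    · obtain ⟨w, hw, hwγ⟩ := hγ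
      rw [show {x ∈ B.neighborSet v | c s(v, x) ≠ γ} = B.neighborSet v from
        sep_eq_self_iff_mem_true.mpr fun x hx =>
          (h.color_eq_of_ndeg_eq_two v h2 x hx w hw).trans_ne hwγ]
      exact ⟨1, h2⟩
    · push Not at hγ
      rw [show {x ∈ B.neighborSet v | c s(v, x) ≠ γ} = ∅ from
        sep_eq_empty_iff_mem_false.mpr fun x hx => by simpa using hγ x hx]
      simp
  · have := ncard_sep_ne_of_injOn (h.injOn_color_of_ndeg_eq_three v h3)
      (by rw [← ndeg, h3, Nat.card_zmod]) γ
    rw [Nat.card_zmod] at this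
    exact ⟨1, this⟩

lemma IsSubdividedKotzig.exists_mem_support_classGraph_compl (h : IsSubdividedKotzig B c)
    (a b : V) : ∃ γ, a ∈ (classGraph B c {γ}ᶜ).support ∧ b ∈ (classGraph B c {γ}ᶜ).support := by
  have hne (x : V) : (B.neighborSet x).Nonempty := by
    refine nonempty_of_ncard_ne_zero ?_
    rcases h.ndeg_eq_two_or_three x with hx | hx <;> rw [ndeg] at hx <;> omega
  obtain ⟨wa, ha⟩ := hne a
  obtain ⟨wb, hb⟩ := hne b
  obtain ⟨γ, hγa, hγb⟩ : ∃ γ, c s(a, wa) ≠ γ ∧ c s(b, wb) ≠ γ := by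
    have : ∀ x y : ZMod 3, ∃ γ, x ≠ γ ∧ y ≠ γ := by decide
    exact this _ _
  exact ⟨γ, ⟨wa, (classGraph_adj ..).mpr ⟨ha, hγa⟩⟩, ⟨wb, (classGraph_adj ..).mpr ⟨hb, hγb⟩⟩⟩

lemma hasSixDoubleCover_of_equiv {ι : Type} (σ : Fin 6 ≃ ι) (G : SimpleGraph V)
    (D : ι → Set (Sym2 V)) (hD : ∀ i, IsEvenSubgraphOf G (D i))
    (hcov : ∀ e ∈ G.edgeSet, {i | e ∈ D i}.ncard = 2) : HasSixDoubleCover G := by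
  refine ⟨D ∘ σ, fun i => hD _, fun e he => ?_⟩
  rw [← hcov e he]
  exact ncard_preimage_of_injective_subset_range (s := {i | e ∈ D i}) σ.injective (by simp)

theorem hasSixDoubleCover_of_split [Finite V] (G : SimpleGraph V) (H S M : ZMod 3 → Set (Sym2 V))
    (hHG : ∀ γ, H γ ⊆ G.edgeSet) (hMG : ∀ γ, M γ ⊆ G.edgeSet) (hH : ∀ γ, IsEvenEdgeSet (H γ))
    (hSH : ∀ γ, S γ ⊆ H γ) (hSM : ∀ γ, oddVertices (S γ) = oddVertices (M γ))
    (hcov : ∀ e ∈ G.edgeSet, (∃ κ, ∀ γ, (e ∈ H γ ↔ γ ≠ κ) ∧ e ∉ M γ) ∨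
      ∃ κ, ∀ γ, e ∉ H γ ∧ (e ∈ M γ ↔ γ = κ)) :
    HasSixDoubleCover G := by
  classical
  let D : ZMod 3 × Bool → Set (Sym2 V) := fun p => (if p.2 then S p.1 else H p.1 \ S p.1) ∪ M p.1
  have hdisj (γ : ZMod 3) : Disjoint (H γ) (M γ) := by
    refine Set.disjoint_left.mpr fun e heH heM => ?_
    rcases hcov e (hHG γ heH) with ⟨κ, hκ⟩ | ⟨κ, hκ⟩
    exacts [(hκ γ).2 heM, (hκ γ).1 heH]
  refine hasSixDoubleCover_of_equiv (Fintype.equivFinOfCardEq (by simp)).symm G D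
    (fun ⟨γ, b⟩ => ⟨?_, ?_⟩) fun e he => ?_
  · refine union_subset ?_ (hMG γ)
    cases b
    exacts [sdiff_subset.trans (hHG γ), (hSH γ).trans (hHG γ)]
  · cases b
    · exact isEvenEdgeSet_union ((hdisj γ).mono_left sdiff_subset)
        ((oddVertices_sdiff (hH γ) (hSH γ)).trans (hSM γ))
    · exact isEvenEdgeSet_union ((hdisj γ).mono_left (hSH γ)) (hSM γ)
  rcases hcov e he with ⟨κ, hκ⟩ | ⟨κ, hκ⟩
  · have : {p | e ∈ D p} = (fun γ => (γ, decide (e ∈ S γ))) '' {κ}ᶜ := by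
      ext ⟨γ, b⟩
      have hS : e ∈ S γ → γ ≠ κ := fun heS => (hκ γ).1.mp (hSH γ heS)
      cases b
      · simp [D, hκ γ]
      · simpa [D, hκ γ] using hS
    rw [this, ncard_image_of_injective _ fun _ _ h => (Prod.mk.inj h).1, compl_singleton_eq_pair,
      ncard_pair (by simp; decide)]
  · have : {p | e ∈ D p} = {κ} ×ˢ univ := by
      ext ⟨γ, b⟩
      have hS : e ∉ S γ := fun heS => (hκ γ).1 (hSH γ heS)
      cases b <;> simp [D, hκ γ, hS]
    simp [this, ncard_prod]

theorem IsSubdividedKotzig.hasSixDoubleCover [Finite V] {G : SimpleGraph V}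
    (h : IsSubdividedKotzig B c) (hBG : B ≤ G) : HasSixDoubleCover G := by
  choose miss hmiss using fun m : Sym2 V =>
    show ∃ γ, ∀ x ∈ m, x ∈ (classGraph B c {γ}ᶜ).support from
      m.ind fun a b => by simpa using h.exists_mem_support_classGraph_compl a b
  let M (γ : ZMod 3) := {m ∈ G.edgeSet \ B.edgeSet | miss m = γ}
  choose S hSH hSM using fun γ => exists_subset_edgeSet_oddVertices_eq (classGraph B c {γ}ᶜ)
    (M γ) (fun m hm => G.not_isDiag_of_mem_edgeSet hm.1.1) fun a b hab =>
      h.supportPreconnected γ a (hab.2 ▸ hmiss _ a (by simp)) b (hab.2 ▸ hmiss _ b (by simp))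
  refine hasSixDoubleCover_of_split G (fun γ => (classGraph B c {γ}ᶜ).edgeSet) S M
    (fun γ e he => by rw [classGraph_edgeSet] at he; exact edgeSet_mono hBG he.1)
    (fun _ _ hm => hm.1.1) h.isEvenEdgeSet_classGraph_compl hSH hSM fun e he => ?_
  simp only [classGraph_edgeSet, mem_ofPred_eq, mem_compl_iff, mem_singleton_iff]
  by_cases heB : e ∈ B.edgeSet
  · exact Or.inl ⟨c e, fun γ => ⟨by simp [heB, eq_comm], fun hm => hm.1.2 heB⟩⟩
  · exact Or.inr ⟨miss e, fun γ => ⟨fun h => heB h.1, by simp [M, he, heB, eq_comm]⟩⟩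

end DoubleCover

end CDC

open CDC SimpleGraph in
theorem stmt_8_general {V : Type} [Fintype V] (G : SimpleGraph V)
    (B : SimpleGraph V) (hBG : B ≤ G)
    (W : Type) (K : SimpleGraph W) (cK : Sym2 W → ZMod 3) (hK : IsKotzig K cK)
    (hsub : IsSubdivisionOf B K) :
    HasSixDoubleCover G := by
  obtain ⟨c, hc⟩ := hsub.exists_isSubdividedKotzig hK.isSubdividedKotzig
  exact hc.hasSixDoubleCover hBG

open CDC SimpleGraph in
/-- a bridgeless cubic graph with a spanning subgraph which is a
subdivision of a Kotzig graph has a 6-even-subgraph double cover. -/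
theorem stmt_8 {V : Type} [Fintype V] (G : SimpleGraph V) (hcub : IsCubic G)
    (hbr : Bridgeless G) (B : SimpleGraph V) (hBG : B ≤ G)
    (W : Type) (K : SimpleGraph W) (cK : Sym2 W → ZMod 3) (hK : IsKotzig K cK)
    (hsub : IsSubdivisionOf B K) :
    HasSixDoubleCover G :=
  stmt_8_general G B hBG W K cK hK hsub
end

section
/- Suppose a bridgeless cubic graph G is covered by three subgraphs G(0,1), G(0,2), G(1,2) such that each edge of a distinguished edge set M lies in exactly one of them, each edge not in M lies in exactly two of them, and for each pair, the suppressed graph of G(α,β) is cubic and the edges of G(α,β) not in M correspond to an even 2-factor of the suppressed graph of G(α,β). Then G has a 6-even-subgraph double cover. -/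
namespace CDC
open SimpleGraph

/-- `S` is (the edge set of) an even 2-factor of `Q`: every vertex meets exactly two
edges of `S` and every circuit (component of `S`) has even length. -/
def IsEvenTwoFactorSet {W : Type} (Q : SimpleGraph W) (S : Set (Sym2 W)) : Prop :=
  S ⊆ Q.edgeSet ∧ (∀ w, esdeg S w = 2) ∧
    ∀ w : W, Even (((SimpleGraph.fromEdgeSet S).connectedComponentMk w).supp.ncard)

end CDC


namespace CDC

open SimpleGraph Set Function

section EdgeDegree

variable {α β : Type}

lemma esdeg_eq_ndeg (G : SimpleGraph α) (v : α) : esdeg G.edgeSet v = ndeg G v := by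
  classical
  rw [esdeg, ndeg, ← Nat.card_coe_set_eq, ← Nat.card_coe_set_eq]
  exact Nat.card_congr (G.incidenceSetEquivNeighborSet v)

lemma esdeg_sep_add_esdeg_sep_not [Finite α] (S : Set (Sym2 α)) (P : Sym2 α → Prop) (v : α) :
    esdeg {e ∈ S | P e} v + esdeg {e ∈ S | ¬ P e} v = esdeg S v := by
  rw [esdeg, esdeg, esdeg, ← ncard_union_eq (by
    rw [Set.disjoint_left]; rintro e ⟨⟨-, h⟩, -⟩ ⟨⟨-, h'⟩, -⟩; exact h' h)]
  congr 1
  ext e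
  simp only [mem_union, mem_ofPred_eq]
  tauto

lemma esdeg_image {f : α → β} (hf : Injective f) (S : Set (Sym2 α)) (v : α) :
    esdeg (Sym2.map f '' S) (f v) = esdeg S v := by
  unfold esdeg
  rw [← ncard_image_of_injective _ (Sym2.map.injective hf)]
  congr 1
  ext e
  simp only [mem_sep_iff, mem_image]
  constructor
  · rintro ⟨⟨e, he, rfl⟩, hv⟩
    obtain ⟨x, hx, hxv⟩ := Sym2.mem_map.mp hv
    exact ⟨e, ⟨he, hf hxv ▸ hx⟩, rfl⟩
  · rintro ⟨e, ⟨he, hv⟩, rfl⟩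
    exact ⟨⟨e, he, rfl⟩, Sym2.mem_map.mpr ⟨v, hv, rfl⟩⟩

lemma IsEvenEdgeSet.image {f : α → β} (hf : Injective f) {S : Set (Sym2 α)}
    (hS : IsEvenEdgeSet S) : IsEvenEdgeSet (Sym2.map f '' S) := by
  intro w
  by_cases hw : w ∈ range f
  · obtain ⟨v, rfl⟩ := hw
    rw [esdeg_image hf]
    exact hS v
  · have hempty : {e ∈ Sym2.map f '' S | w ∈ e} = ∅ := by
      refine eq_empty_of_forall_notMem ?_
      rintro _ ⟨⟨e, -, rfl⟩, hwe⟩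
      obtain ⟨x, -, rfl⟩ := Sym2.mem_map.mp hwe
      exact hw ⟨x, rfl⟩
    rw [esdeg, hempty, ncard_empty]
    exact Even.zero

end EdgeDegree

section CycleMatching

variable {W : Type} {H : SimpleGraph W}

lemma _root_.SimpleGraph.Walk.IsCycle.exists_lt_length_getVert_eq {v x : W} {p : H.Walk v v}
    (hp : p.IsCycle) (hx : x ∈ p.support) : ∃ k < p.length, p.getVert k = x := by
  obtain ⟨k, rfl, hk⟩ := Walk.mem_support_iff_exists_getVert.mp hx
  rcases hk.lt_or_eq with hk | rfl
  · exact ⟨k, hk, rfl⟩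
  · exact ⟨0, by have := hp.three_le_length; omega, by simp⟩

lemma _root_.SimpleGraph.Walk.IsCycle.length_eq_ncard_support {v : W} {p : H.Walk v v}
    (hp : p.IsCycle) : p.length = {x | x ∈ p.support}.ncard := by
  have hsupp : {x | x ∈ p.support} = p.getVert '' Iio p.length := by
    ext x
    refine ⟨fun hx => hp.exists_lt_length_getVert_eq hx, ?_⟩
    rintro ⟨k, -, rfl⟩
    exact p.getVert_mem_support k
  rw [hsupp, InjOn.ncard_image (hp.getVert_injOn'.mono fun k hk => by
    simp only [mem_Iio] at hk; simp only [mem_ofPred_eq]; omega), Set.ncard_Iio_nat]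

lemma exists_perfectMatching_of_isCycle {v : W} {p : H.Walk v v} (hp : p.IsCycle)
    (hev : Even p.length) :
    ∃ A ⊆ H.edgeSet,
      (∀ e ∈ A, ∀ x ∈ e, x ∈ p.support) ∧ ∀ x ∈ p.support, esdeg A x = 1 := by
  set n := p.length
  have hn : n % 2 = 0 := Nat.even_iff.mp hev
  have hinj : ∀ {i j}, i < n → j < n → p.getVert i = p.getVert j → i = j := fun hi hj h =>
    hp.getVert_injOn' (by simp only [mem_ofPred_eq]; omega) (by simp only [mem_ofPred_eq]; omega) h
  refine ⟨{e | ∃ i, i % 2 = 0 ∧ i < n ∧ e = s(p.getVert i, p.getVert (i + 1))},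
    ?_, ?_, ?_⟩
  · rintro e ⟨i, -, hi, rfl⟩
    exact p.adj_getVert_succ hi
  · rintro e ⟨i, -, -, rfl⟩ x hx
    rcases Sym2.mem_iff.mp hx with rfl | rfl <;> exact p.getVert_mem_support _
  · intro x hx
    obtain ⟨k, hk, rfl⟩ := hp.exists_lt_length_getVert_eq hx
    rw [esdeg, ncard_eq_one]
    refine ⟨s(p.getVert (k - k % 2), p.getVert (k - k % 2 + 1)), ?_⟩
    ext e
    simp only [mem_ofPred_eq, mem_singleton_iff]
    constructor
    · rintro ⟨⟨i, hi2, hi, rfl⟩, hki⟩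
      rcases Sym2.mem_iff.mp hki with h | h
      · obtain rfl := hinj hk hi h
        rw [hi2, Nat.sub_zero]
      · rcases (show i + 1 ≤ n by omega).lt_or_eq with hi' | hi'
        · obtain rfl := hinj hk hi' h
          congr 3 <;> omega
        · -- the closing edge of the cycle starts at the odd position `n - 1`
          rw [hi', Walk.getVert_length] at h
          obtain rfl := hinj hk (by omega) (h.trans p.getVert_zero.symm)
          exact absurd hi' (by omega)
    · rintro rfl
      refine ⟨⟨k - k % 2, by omega, by omega, rfl⟩, ?_⟩
      rcases Nat.mod_two_eq_zero_or_one k with h | h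
      · exact Sym2.mem_iff.mpr (Or.inl (by rw [h, Nat.sub_zero]))
      · exact Sym2.mem_iff.mpr (Or.inr (by congr 1; omega))

lemma exists_perfectMatching_of_even_components [Finite W] (H : SimpleGraph W)
    (h2 : ∀ w, ndeg H w = 2) (hev : ∀ w, Even (H.connectedComponentMk w).supp.ncard) :
    ∃ A ⊆ H.edgeSet, ∀ w, esdeg A w = 1 := by
  have hcomp : ∀ c : H.ConnectedComponent, ∃ A ⊆ H.edgeSet,
      (∀ e ∈ A, ∀ x ∈ e, x ∈ c.supp) ∧ ∀ x ∈ c.supp, esdeg A x = 1 := by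
    refine fun c => c.ind fun v => ?_
    obtain ⟨p, hp, hverts⟩ := IsCycles.exists_cycle_toSubgraph_verts_eq_connectedComponentSupp
      (v := v) (c := H.connectedComponentMk v) (fun w _ => h2 w) rfl
      (nonempty_of_ncard_ne_zero (by rw [← ndeg, h2]; norm_num))
    have hlen : Even p.length := by
      rw [hp.length_eq_ncard_support, ← Walk.verts_toSubgraph, hverts]
      exact hev v
    rw [← hverts, Walk.verts_toSubgraph]
    exact exists_perfectMatching_of_isCycle hp hlen
  choose A hAH hAsupp hAdeg using hcomp
  refine ⟨⋃ c, A c, iUnion_subset hAH, fun w => ?_⟩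
  have hloc : {e ∈ ⋃ c, A c | w ∈ e} = {e ∈ A (H.connectedComponentMk w) | w ∈ e} := by
    ext e
    simp only [mem_sep_iff, mem_iUnion]
    constructor
    · rintro ⟨⟨c, he⟩, hw⟩
      obtain rfl : H.connectedComponentMk w = c := hAsupp c e he w hw
      exact ⟨he, hw⟩
    · rintro ⟨he, hw⟩
      exact ⟨⟨_, he⟩, hw⟩
  rw [esdeg, hloc]
  exact hAdeg _ w rfl

end CycleMatching

section Subdivision

variable {α L : Type}

lemma extendLabel_map_some (ℓ : Sym2 α → L) (u v : α) (e : Sym2 α) :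
    extendLabel ℓ u v (e.map some) = ℓ e := by
  induction e using Sym2.ind
  rfl

lemma extendLabel_mk_none (ℓ : Sym2 α → L) (u v : α) (w : Option α) :
    extendLabel ℓ u v s(none, w) = ℓ s(u, v) := by
  cases w <;> rfl

lemma extendLabel_map₂ {L₁ L₂ : Type} (g : L₁ → L₂ → L) (ℓ₁ : Sym2 α → L₁)
    (ℓ₂ : Sym2 α → L₂) (u v : α) (e : Sym2 (Option α)) :
    extendLabel (fun e => g (ℓ₁ e) (ℓ₂ e)) u v e =
      g (extendLabel ℓ₁ u v e) (extendLabel ℓ₂ u v e) := by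
  induction e using Sym2.ind with
  | h x y => cases x <;> cases y <;> rfl

lemma mem_edgeSet_subdivideEdge {G : SimpleGraph α} {u v : α} {e : Sym2 (Option α)} :
    e ∈ (subdivideEdge G u v).edgeSet ↔
      (∃ e₀ ∈ G.edgeSet, e₀ ≠ s(u, v) ∧ e = e₀.map some) ∨
        e = s(none, some u) ∨ e = s(none, some v) := by
  simp only [subdivideEdge, edgeSet_fromEdgeSet, mem_sdiff, mem_union, mem_ofPred_eq,
    mem_insert_iff, mem_singleton_iff, Sym2.mem_diagSet]
  constructor
  · rintro ⟨⟨a, b, hab, hne, rfl⟩ | h, -⟩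
    · exact Or.inl ⟨s(a, b), hab, hne, rfl⟩
    · exact Or.inr h
  · rintro (⟨e₀, he₀, hne, rfl⟩ | rfl | rfl)
    · induction e₀ using Sym2.ind with
      | h a b => exact ⟨Or.inl ⟨a, b, he₀, hne, rfl⟩, by simpa using G.ne_of_adj he₀⟩
    · exact ⟨Or.inr (Or.inl rfl), by simp⟩
    · exact ⟨Or.inr (Or.inr rfl), by simp⟩

lemma none_notMem_map_some (e : Sym2 α) : none ∉ e.map some := by
  intro h
  obtain ⟨x, -, hx⟩ := Sym2.mem_map.mp h
  exact Option.some_ne_none x hx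

lemma even_esdeg_subdivideEdge_none {G : SimpleGraph α} {u v : α} (h : G.Adj u v)
    (P : Sym2 α → Prop) :
    Even (esdeg {e ∈ (subdivideEdge G u v).edgeSet | extendLabel P u v e} none) := by
  have hnone : {e ∈ {e ∈ (subdivideEdge G u v).edgeSet | extendLabel P u v e} | none ∈ e} =
      {e | P s(u, v) ∧ (e = s(none, some u) ∨ e = s(none, some v))} := by
    ext e
    constructor
    · rintro ⟨⟨he, hPe⟩, hnone⟩
      rcases mem_edgeSet_subdivideEdge.mp he with ⟨e₀, -, -, rfl⟩ | rfl | rfl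
      · exact absurd hnone (none_notMem_map_some e₀)
      · exact ⟨(extendLabel_mk_none P u v _).mp hPe, Or.inl rfl⟩
      · exact ⟨(extendLabel_mk_none P u v _).mp hPe, Or.inr rfl⟩
    · rintro ⟨hPuv, rfl | rfl⟩
      · exact ⟨⟨mem_edgeSet_subdivideEdge.mpr (Or.inr (Or.inl rfl)),
          (extendLabel_mk_none P u v _).mpr hPuv⟩, Sym2.mem_mk_left _ _⟩
      · exact ⟨⟨mem_edgeSet_subdivideEdge.mpr (Or.inr (Or.inr rfl)),
          (extendLabel_mk_none P u v _).mpr hPuv⟩, Sym2.mem_mk_left _ _⟩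
  rw [esdeg, hnone]
  by_cases hPuv : P s(u, v)
  · rw [show {e | P s(u, v) ∧ (e = s(none, some u) ∨ e = s(none, some v))} =
        {s(none, some u), s(none, some v)} by ext; simp [hPuv],
      ncard_pair (by simp [h.ne])]
    exact even_two
  · rw [show {e | P s(u, v) ∧ (e = s(none, some u) ∨ e = s(none, some v))} = ∅ by
        ext; simp [hPuv], ncard_empty]
    exact Even.zero

lemma esdeg_subdivideEdge_some {G : SimpleGraph α} {u v : α} (h : G.Adj u v)
    (P : Sym2 α → Prop) (w : α) :
    esdeg {e ∈ (subdivideEdge G u v).edgeSet | extendLabel P u v e} (some w) =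
      esdeg {e ∈ G.edgeSet | P e} w := by
  classical
  -- the half-edge `s(none, some w)` takes over the role of the subdivided edge at `w`
  let φ : Sym2 α → Sym2 (Option α) := fun e =>
    if e = s(u, v) then s(none, some w) else e.map some
  have himage :
      {e ∈ {e ∈ (subdivideEdge G u v).edgeSet | extendLabel P u v e} | some w ∈ e} =
        φ '' {e ∈ {e ∈ G.edgeSet | P e} | w ∈ e} := by
    ext e'
    constructor
    · rintro ⟨⟨he', hPe'⟩, hw⟩
      rcases mem_edgeSet_subdivideEdge.mp he' with ⟨e, he, hne, rfl⟩ | rfl | rfl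
      · obtain ⟨x, hx, hxw⟩ := Sym2.mem_map.mp hw
        refine ⟨e, ⟨⟨he, (extendLabel_map_some P u v e).mp hPe'⟩, ?_⟩, if_neg hne⟩
        exact Option.some_injective α hxw ▸ hx
      · obtain rfl : w = u := by simpa using hw
        refine ⟨s(w, v), ⟨⟨h, (extendLabel_mk_none P w v _).mp hPe'⟩, ?_⟩, if_pos rfl⟩
        exact Sym2.mem_mk_left _ _
      · obtain rfl : w = v := by simpa using hw
        refine ⟨s(u, w), ⟨⟨h, (extendLabel_mk_none P u w _).mp hPe'⟩, ?_⟩, if_pos rfl⟩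
        exact Sym2.mem_mk_right _ _
    · rintro ⟨e, ⟨⟨he, hPe⟩, hw⟩, rfl⟩
      by_cases huv : e = s(u, v)
      · subst huv
        simp only [φ, if_true]
        refine ⟨⟨mem_edgeSet_subdivideEdge.mpr (Or.inr ?_),
          (extendLabel_mk_none P u v _).mpr hPe⟩, Sym2.mem_mk_right _ _⟩
        rcases Sym2.mem_iff.mp hw with rfl | rfl
        exacts [Or.inl rfl, Or.inr rfl]
      · simp only [φ, huv, if_false]
        exact ⟨⟨mem_edgeSet_subdivideEdge.mpr (Or.inl ⟨e, he, huv, rfl⟩),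
          (extendLabel_map_some P u v e).mpr hPe⟩, Sym2.mem_map.mpr ⟨w, hw, rfl⟩⟩
  have hinj : InjOn φ {e ∈ {e ∈ G.edgeSet | P e} | w ∈ e} := by
    intro e₁ _ e₂ _ heq
    simp only [φ] at heq
    split_ifs at heq with h₁ h₂ h₂
    · rw [h₁, h₂]
    · exact absurd (heq ▸ Sym2.mem_mk_left _ _) (none_notMem_map_some e₂)
    · exact absurd (heq ▸ Sym2.mem_mk_left _ _) (none_notMem_map_some e₁)
    · exact Sym2.map.injective (Option.some_injective α) heq
  rw [esdeg, esdeg, himage, hinj.ncard_image]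

lemma IsEvenEdgeSet.subdivide {G : SimpleGraph α} {u v : α} (h : G.Adj u v)
    {P : Sym2 α → Prop} (hP : IsEvenEdgeSet {e ∈ G.edgeSet | P e}) :
    IsEvenEdgeSet {e ∈ (subdivideEdge G u v).edgeSet | extendLabel P u v e}
  | none => even_esdeg_subdivideEdge_none h P
  | some w => esdeg_subdivideEdge_some h P w ▸ hP w

end Subdivision

def HasEvenSplit {α : Type} (G : SimpleGraph α) (ℓ : Sym2 α → Prop) : Prop :=
  ∃ A : Set (Sym2 α), IsEvenEdgeSet {e ∈ G.edgeSet | ℓ e ∨ e ∈ A} ∧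
    IsEvenEdgeSet {e ∈ G.edgeSet | ℓ e ∨ e ∉ A}

section EvenSplit

variable {α β : Type}

lemma HasEvenSplit.map {f : α → β} (hf : Injective f) {G : SimpleGraph α} {G' : SimpleGraph β}
    (hE : G'.edgeSet = Sym2.map f '' G.edgeSet) {ℓ : Sym2 α → Prop} {ℓ' : Sym2 β → Prop}
    (hℓ : ∀ e ∈ G.edgeSet, ℓ' (e.map f) ↔ ℓ e) (h : HasEvenSplit G ℓ) :
    HasEvenSplit G' ℓ' := by
  obtain ⟨A, hA, hB⟩ := h
  have himage : ∀ Q : Prop → Prop, {e ∈ G'.edgeSet | ℓ' e ∨ Q (e ∈ Sym2.map f '' A)} =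
      Sym2.map f '' {e ∈ G.edgeSet | ℓ e ∨ Q (e ∈ A)} := by
    intro Q
    rw [hE]
    ext e
    constructor
    · rintro ⟨⟨e, he, rfl⟩, hQ⟩
      rw [hℓ e he, (Sym2.map.injective hf).mem_set_image] at hQ
      exact ⟨e, ⟨he, hQ⟩, rfl⟩
    · rintro ⟨e, ⟨he, hQ⟩, rfl⟩
      rw [← hℓ e he, ← (Sym2.map.injective hf).mem_set_image] at hQ
      exact ⟨⟨e, he, rfl⟩, hQ⟩
  exact ⟨Sym2.map f '' A, himage id ▸ hA.image hf, himage Not ▸ hB.image hf⟩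

lemma HasEvenSplit.subdivide {G : SimpleGraph α} {ℓ : Sym2 α → Prop} {u v : α}
    (h : G.Adj u v) (hG : HasEvenSplit G ℓ) :
    HasEvenSplit (subdivideEdge G u v) (extendLabel ℓ u v) := by
  obtain ⟨A, hA, hB⟩ := hG
  refine ⟨{e | extendLabel (· ∈ A) u v e}, ?_, ?_⟩
  · simpa only [extendLabel_map₂ (· ∨ ·) ℓ (· ∈ A), mem_ofPred_eq] using hA.subdivide h
  · simpa only [extendLabel_map₂ (fun p q => p ∨ ¬ q) ℓ (· ∈ A), mem_ofPred_eq]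
      using hB.subdivide h

lemma _root_.SimpleGraph.Iso.edgeSet_eq_image {G : SimpleGraph α} {G' : SimpleGraph β}
    (f : G ≃g G') : G'.edgeSet = Sym2.map f '' G.edgeSet := by
  ext e
  refine ⟨fun he => ⟨e.map f.symm, ?_, ?_⟩, ?_⟩
  · rwa [← f.map_mem_edgeSet_iff, Sym2.map_map, f.self_comp_symm, Sym2.map_id, id]
  · rw [Sym2.map_map, f.self_comp_symm, Sym2.map_id, id]
  · rintro ⟨e, he, rfl⟩
    exact f.map_mem_edgeSet_iff.mpr he

lemma HasEvenSplit.of_isLabeledSubdivisionOf {G : SimpleGraph α} {ℓG : Sym2 α → Prop}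
    {K : SimpleGraph β} {ℓK : Sym2 β → Prop} (h : IsLabeledSubdivisionOf G ℓG K ℓK)
    (hK : HasEvenSplit K ℓK) : HasEvenSplit G ℓG := by
  induction h with
  | base G ℓG K ℓK f hf =>
    refine hK.map f.symm.injective f.symm.edgeSet_eq_image fun e he => ?_
    induction e using Sym2.ind with
    | h a b => simp [hf _ _ (f.symm.map_adj_iff.mpr he)]
  | step G ℓG K ℓK u v hadj _ ih => exact (ih hK).subdivide hadj
  | iso G G' ℓG ℓG' K ℓK f hf _ ih =>
    refine (ih hK).map f.injective f.edgeSet_eq_image fun e he => ?_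
    induction e using Sym2.ind with
    | h a b => exact (hf a b he).symm ▸ Iff.rfl

end EvenSplit

lemma hasEvenSplit_of_isEvenTwoFactorSet {W : Type} [Finite W] {Q : SimpleGraph W}
    {ℓ : Sym2 W → Prop} (hQ : IsCubic Q)
    (hF : IsEvenTwoFactorSet Q {e ∈ Q.edgeSet | ¬ ℓ e}) : HasEvenSplit Q ℓ := by
  obtain ⟨-, hF2, hFev⟩ := hF
  set F := {e ∈ Q.edgeSet | ¬ ℓ e}
  have hFE : (fromEdgeSet F).edgeSet = F := by
    rw [edgeSet_fromEdgeSet, sdiff_eq_left, Set.disjoint_left]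
    exact fun e he => Q.not_isDiag_of_mem_edgeSet he.1
  obtain ⟨A, hAF, hA⟩ := exists_perfectMatching_of_even_components (fromEdgeSet F)
    (fun w => by rw [← esdeg_eq_ndeg, hFE, hF2]) hFev
  rw [hFE] at hAF
  have hL : ∀ w, esdeg {e ∈ Q.edgeSet | ℓ e} w = 1 := fun w => by
    have := esdeg_sep_add_esdeg_sep_not Q.edgeSet ℓ w
    rw [esdeg_eq_ndeg, hQ w, hF2 w] at this
    omega
  have hFA : ∀ w, esdeg {e ∈ F | e ∉ A} w = 1 := fun w => by
    have := esdeg_sep_add_esdeg_sep_not F (· ∈ A) w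
    rw [hF2 w, show {e ∈ F | e ∈ A} = A from sep_eq_of_subset hAF, hA w] at this
    omega
  refine ⟨A, fun w => ?_, fun w => ?_⟩
  · have hsplit := esdeg_sep_add_esdeg_sep_not {e ∈ Q.edgeSet | ℓ e ∨ e ∈ A} ℓ w
    rw [show {e ∈ {e ∈ Q.edgeSet | ℓ e ∨ e ∈ A} | ℓ e} = {e ∈ Q.edgeSet | ℓ e} by
        ext e; simp only [mem_ofPred_eq]; tauto,
      show {e ∈ {e ∈ Q.edgeSet | ℓ e ∨ e ∈ A} | ¬ ℓ e} = A by
        ext e; have := @hAF e; simp only [F, mem_ofPred_eq] at this ⊢; tauto,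
      hL, hA] at hsplit
    exact hsplit ▸ even_two
  · have hsplit := esdeg_sep_add_esdeg_sep_not {e ∈ Q.edgeSet | ℓ e ∨ e ∉ A} ℓ w
    rw [show {e ∈ {e ∈ Q.edgeSet | ℓ e ∨ e ∉ A} | ℓ e} = {e ∈ Q.edgeSet | ℓ e} by
        ext e; simp only [mem_ofPred_eq]; tauto,
      show {e ∈ {e ∈ Q.edgeSet | ℓ e ∨ e ∉ A} | ¬ ℓ e} = {e ∈ F | e ∉ A} by
        ext e; simp only [F, mem_ofPred_eq]; tauto,
      hL, hFA] at hsplit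
    exact hsplit ▸ even_two

lemma _root_.SimpleGraph.edgeSet_eq_image_induce_support {α : Type} (K : SimpleGraph α) :
    K.edgeSet = Sym2.map Subtype.val '' (K.induce K.support).edgeSet := by
  conv_lhs => rw [← spanningCoe_induce_support K]
  exact edgeSet_map _ _

lemma hasSixDoubleCover_of_card_eq_six {V ι : Type} [Fintype ι] {G : SimpleGraph V}
    (hι : Fintype.card ι = 6) (D : ι → Set (Sym2 V)) (hD : ∀ i, IsEvenSubgraphOf G (D i))
    (h2 : ∀ e ∈ G.edgeSet, {i | e ∈ D i}.ncard = 2) : HasSixDoubleCover G := by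
  let σ := Fintype.equivFinOfCardEq hι
  refine ⟨D ∘ σ.symm, fun j => hD _, fun e he => ?_⟩
  rw [← h2 e he, ← ncard_image_of_injective _ σ.injective, σ.image_eq_preimage_symm]
  rfl

lemma hasSixDoubleCover_of_hasEvenSplit {V : Type} (G : SimpleGraph V) (M : Set (Sym2 V))
    (K : Fin 3 → SimpleGraph V) (hKG : ∀ i, K i ≤ G)
    (hcov1 : ∀ e ∈ M, {i : Fin 3 | e ∈ (K i).edgeSet}.ncard = 1)
    (hcov2 : ∀ e ∈ G.edgeSet, e ∉ M → {i : Fin 3 | e ∈ (K i).edgeSet}.ncard = 2)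
    (hsplit : ∀ i, HasEvenSplit (K i) (· ∈ M)) : HasSixDoubleCover G := by
  classical
  choose A hA hB using hsplit
  let D : Fin 3 × Bool → Set (Sym2 V) := fun p =>
    {e ∈ (K p.1).edgeSet | e ∈ M ∨ (e ∈ A p.1 ↔ p.2)}
  refine hasSixDoubleCover_of_card_eq_six rfl D
    (fun ⟨i, b⟩ => ⟨fun e he => edgeSet_mono (hKG i) he.1, ?_⟩) fun e he => ?_
  · cases b
    · simpa [D] using hB i
    · simpa [D] using hA i
  · by_cases heM : e ∈ M
    · have : {p | e ∈ D p} = {i | e ∈ (K i).edgeSet} ×ˢ univ := by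
        ext ⟨i, b⟩
        simp only [D, mem_ofPred_eq, mem_prod, mem_univ, heM, true_or, and_true]
      rw [this, ncard_prod, hcov1 e heM, ncard_univ, Nat.card_eq_fintype_card, Fintype.card_bool,
        one_mul]
    · have : {p | e ∈ D p} =
          (fun i => (i, decide (e ∈ A i))) '' {i | e ∈ (K i).edgeSet} := by
        ext ⟨i, b⟩; cases b <;> simp [D, heM]
      rw [this, ncard_image_of_injective _ (fun i j h => (Prod.ext_iff.mp h).1), hcov2 e he heM]

end CDC

open CDC SimpleGraph in
theorem stmt_9_general {V : Type} (G : SimpleGraph V) (M : Set (Sym2 V))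
    (K : Fin 3 → SimpleGraph V) (hKG : ∀ i, K i ≤ G)
    (hcov1 : ∀ e ∈ M, {i : Fin 3 | e ∈ (K i).edgeSet}.ncard = 1)
    (hcov2 : ∀ e ∈ G.edgeSet, e ∉ M → {i : Fin 3 | e ∈ (K i).edgeSet}.ncard = 2)
    (hsup : ∀ i : Fin 3, ∃ (W : Type) (_ : Fintype W) (Q : SimpleGraph W)
      (ℓQ : Sym2 W → Prop),
        IsCubic Q ∧
        IsLabeledSubdivisionOf (SimpleGraph.induce (K i).support (K i))
          (fun e => e.map Subtype.val ∈ M) Q ℓQ ∧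
        IsEvenTwoFactorSet Q {e ∈ Q.edgeSet | ¬ ℓQ e}) :
    HasSixDoubleCover G := by
  refine hasSixDoubleCover_of_hasEvenSplit G M K hKG hcov1 hcov2 fun i => ?_
  obtain ⟨W, _, Q, ℓQ, hQ, hsub, hF⟩ := hsup i
  exact ((hasEvenSplit_of_isEvenTwoFactorSet hQ hF).of_isLabeledSubdivisionOf hsub).map
    Subtype.val_injective (K i).edgeSet_eq_image_induce_support fun _ _ => Iff.rfl

open CDC SimpleGraph in
/-- if a bridgeless cubic graph `G` is covered by three subgraphs so that
each edge of a distinguished set `M` lies in exactly one of them and each other edge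
in exactly two, and each subgraph, with its edges labelled by membership in `M`, is a
subdivision of a cubic graph whose non-`M`-labelled edges form an even 2-factor, then
`G` has a 6-even-subgraph double cover. -/
theorem stmt_9 {V : Type} [Fintype V] (G : SimpleGraph V) (hcub : IsCubic G)
    (hbr : Bridgeless G) (M : Set (Sym2 V)) (hM : M ⊆ G.edgeSet)
    (K : Fin 3 → SimpleGraph V) (hKG : ∀ i, K i ≤ G)
    (hcov1 : ∀ e ∈ M, {i : Fin 3 | e ∈ (K i).edgeSet}.ncard = 1)
    (hcov2 : ∀ e ∈ G.edgeSet, e ∉ M → {i : Fin 3 | e ∈ (K i).edgeSet}.ncard = 2)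
    (hsup : ∀ i : Fin 3, ∃ (W : Type) (_ : Fintype W) (Q : SimpleGraph W)
      (ℓQ : Sym2 W → Prop),
        IsCubic Q ∧
        IsLabeledSubdivisionOf (SimpleGraph.induce (K i).support (K i))
          (fun e => e.map Subtype.val ∈ M) Q ℓQ ∧
        IsEvenTwoFactorSet Q {e ∈ Q.edgeSet | ¬ ℓQ e}) :
    HasSixDoubleCover G :=
  stmt_9_general G M K hKG hcov1 hcov2 hsup
end

section
/- Let T be a spanning tree of a connected graph K. Then T contains a parity subgraph P of K, i.e., a spanning subgraph P ⊆ T such that for every vertex v, the degree of v in P is congruent modulo 2 to the degree of v in K. -/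
private lemma zmod_two_cases : ∀ a : ZMod 2, a = 0 ∨ a = 1 := by decide

private lemma natCast_zmod_two_eq (n : ℕ) :
    (n : ZMod 2) = if Even n then 0 else 1 := by
  rw [← ZMod.natCast_mod]
  rcases Nat.even_or_odd n with h | h
  · rw [Nat.even_iff.mp h, if_pos h, Nat.cast_zero]
  · rw [Nat.odd_iff.mp h, if_neg (Nat.not_even_iff_odd.mpr h), Nat.cast_one]

private lemma countP_parity {V : Type} [DecidableEq V] {T : SimpleGraph V} {v r : V}
    {q : T.Walk v r} (hq : q.IsPath) (u : V) :
    ((q.edges.countP fun e => u ∈ e : ℕ) : ZMod 2)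
      = if v ≠ r ∧ (u = v ∨ u = r) then 1 else 0 := by
  rw [natCast_zmod_two_eq]
  have h := hq.isTrail.even_countP_edges_iff u
  by_cases hc : v ≠ r ∧ (u = v ∨ u = r)
  · rw [if_pos hc, if_neg]
    rw [h]
    intro himp
    obtain ⟨h1, h2⟩ := himp hc.1
    rcases hc.2 with rfl | rfl <;> simp_all
  · rw [if_neg hc, if_pos]
    rw [h]
    intro hvr
    push_neg at hc
    have := hc hvr
    exact this

private lemma card_filter_eq_countP {α : Type} [Fintype α] [DecidableEq α]
    (l : List α) (hl : l.Nodup) (p : α → Prop) [DecidablePred p] :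
    (Finset.univ.filter fun a => p a ∧ a ∈ l).card = l.countP fun a => p a := by
  rw [List.countP_eq_length_filter, ← List.toFinset_card_of_nodup (hl.filter _)]
  congr 1
  ext a
  simp [List.mem_filter, and_comm]

open CDC SimpleGraph in
/-- Itai–Rodeh: every spanning tree `T` of a connected graph `K`
contains a parity subgraph `P` of `K`. -/
theorem stmt_15 {V : Type} [Fintype V] (K : SimpleGraph V) (hK : K.Connected)
    (T : SimpleGraph V) (hTK : T ≤ K) (hT : T.IsTree) :
    ∃ P : Set (Sym2 V), P ⊆ T.edgeSet ∧ ∀ v, esdeg P v % 2 = ndeg K v % 2 := by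
  classical
  have hTc : T.Connected := hT.isConnected
  obtain ⟨r⟩ : Nonempty V := hK.nonempty
  -- a path from each vertex to the root `r`
  let w : ∀ v : V, T.Path v r := fun v => (hTc.preconnected v r).some.toPath
  -- the odd-degree vertices of `K`
  let O : Finset V := Finset.univ.filter fun v => Odd (ndeg K v)
  -- indicator of the symmetric difference of the paths from odd vertices
  let x : Sym2 V → ZMod 2 := fun e => ∑ v ∈ O, if e ∈ (w v).1.edges then 1 else 0
  set P : Set (Sym2 V) := {e | e ∈ T.edgeSet ∧ x e = 1} with hPdef
  refine ⟨P, fun e he => he.1, ?_⟩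
  intro u
  have hxT : ∀ e : Sym2 V, x e ≠ 0 → e ∈ T.edgeSet := by
    intro e hx
    by_contra he
    apply hx
    refine Finset.sum_eq_zero fun v _ => ?_
    rw [if_neg]
    exact fun hmem => he ((w v).1.edges_subset_edgeSet hmem)
  have hdeg : ∀ v, ndeg K v = K.degree v := by
    intro v
    rw [ndeg, Set.ncard_eq_toFinset_card', degree, neighborFinset_def]
  -- rewrite `esdeg` as a finset card
  let F : Finset (Sym2 V) := Finset.univ.filter fun e => e ∈ P ∧ u ∈ e
  have hesd : esdeg P u = F.card := by
    rw [esdeg, show {e ∈ P | u ∈ e} = (↑F : Set (Sym2 V)) by ext e; simp [F]]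
    exact Set.ncard_coe_finset F
  rw [hesd]
  apply (ZMod.natCast_eq_natCast_iff' _ _ 2).mp
  -- main computation in `ZMod 2`
  have step1 : (F.card : ZMod 2) = ∑ e : Sym2 V, if u ∈ e then x e else 0 := by
    rw [Finset.card_filter, Nat.cast_sum]
    refine Finset.sum_congr rfl fun e _ => ?_
    push_cast
    by_cases hu : u ∈ e
    · by_cases hp : e ∈ P
      · simp [hu, hp, hp.2]
      · rw [if_neg (by simp [hu, hp]), if_pos hu]
        rcases zmod_two_cases (x e) with h0 | h1
        · simp [h0]
        · exact absurd ⟨hxT e (h1 ▸ one_ne_zero), h1⟩ hp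
    · simp [hu]
  have step2 : (∑ e : Sym2 V, if u ∈ e then x e else 0)
      = ∑ v ∈ O, ∑ e : Sym2 V, if u ∈ e ∧ e ∈ (w v).1.edges then (1 : ZMod 2) else 0 := by
    rw [Finset.sum_comm]
    refine Finset.sum_congr rfl fun e _ => ?_
    by_cases hu : u ∈ e
    · rw [if_pos hu]
      exact Finset.sum_congr rfl fun v _ => by simp [hu]
    · simp [hu]
  have step3 : ∀ v : V,
      (∑ e : Sym2 V, if u ∈ e ∧ e ∈ (w v).1.edges then (1 : ZMod 2) else 0)
        = if v ≠ r ∧ (u = v ∨ u = r) then 1 else 0 := by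
    intro v
    have h1 : (∑ e : Sym2 V, if u ∈ e ∧ e ∈ (w v).1.edges then (1 : ZMod 2) else 0)
        = ((Finset.univ.filter fun e : Sym2 V => u ∈ e ∧ e ∈ (w v).1.edges).card : ℕ) := by
      rw [Finset.card_filter, Nat.cast_sum]
      push_cast
      rfl
    rw [h1, card_filter_eq_countP _ ((w v).2.isTrail.edges_nodup) _]
    exact countP_parity (w v).2 u
  rw [step1, step2]
  have step4 : (∑ v ∈ O, if v ≠ r ∧ (u = v ∨ u = r) then (1 : ZMod 2) else 0)
      = ((ndeg K u : ℕ) : ZMod 2) := by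
    have hmem : ∀ z, z ∈ O ↔ Odd (ndeg K z) := fun z => by simp [O]
    have hcast : ∀ z, ((ndeg K z : ℕ) : ZMod 2) = if z ∈ O then 1 else 0 := by
      intro z
      rw [natCast_zmod_two_eq]
      by_cases h : z ∈ O
      · rw [if_pos h, if_neg (Nat.not_even_iff_odd.mpr ((hmem z).mp h))]
      · rw [if_neg h, if_pos (Nat.not_odd_iff_even.mp (fun ho => h ((hmem z).mpr ho)))]
    by_cases hur : u = r
    · subst hur
      have hcond : ∀ v ∈ O, (if v ≠ u ∧ (u = v ∨ u = u) then (1 : ZMod 2) else 0)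
          = if v ≠ u then 1 else 0 := fun v _ => by
        by_cases h : v = u <;> simp [h]
      rw [Finset.sum_congr rfl hcond, Finset.sum_ite, Finset.sum_const, Finset.sum_const,
        smul_zero, add_zero]
      have hOeven : Even O.card := by
        have : O = Finset.univ.filter fun v => Odd (K.degree v) := by
          refine Finset.filter_congr fun v _ => ?_
          rw [hdeg]
        rw [this]
        exact K.even_card_odd_degree_vertices
      have hsplit : O.card = (O.filter fun v => ¬v = u).card + (O.filter fun v => v = u).card := by
        have := Finset.card_filter_add_card_filter_not (s := O) (p := fun v => v = u)
        omega
      have hceq : ((O.filter fun v => ¬v = u).card : ZMod 2)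
          = ((O.filter fun v => v = u).card : ZMod 2) := by
        have h2 : ((O.card : ℕ) : ZMod 2) = 0 := by
          rw [natCast_zmod_two_eq, if_pos hOeven]
        rw [hsplit, Nat.cast_add] at h2
        rcases zmod_two_cases ((O.filter fun v => ¬v = u).card : ZMod 2) with h | h <;>
          rcases zmod_two_cases ((O.filter fun v => v = u).card : ZMod 2) with h' | h' <;>
          simp_all
      have hfe : (O.filter fun v => v = u) = if u ∈ O then {u} else ∅ := by
        ext a
        by_cases hau : a = u
        · subst hau; by_cases h : a ∈ O <;> simp [h]
        · by_cases h : u ∈ O <;> simp [hau, h]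
      rw [nsmul_eq_mul, mul_one, hceq, hfe, hcast u]
      by_cases h : u ∈ O <;> simp [h]
    · have hcond : ∀ v ∈ O, (if v ≠ r ∧ (u = v ∨ u = r) then (1 : ZMod 2) else 0)
          = if v = u then 1 else 0 := by
        intro v _
        by_cases h : v = u
        · subst h
          rw [if_pos ⟨hur, Or.inl rfl⟩, if_pos rfl]
        · rw [if_neg, if_neg h]
          rintro ⟨-, h2 | h2⟩
          · exact h h2.symm
          · exact hur h2
      rw [Finset.sum_congr rfl hcond, Finset.sum_ite_eq' O u (fun _ => (1 : ZMod 2)), hcast u]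
  rw [Finset.sum_congr rfl (fun v _ => step3 v), step4]
end
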